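/- Let M be a graded multiplication R-module and N a proper graded submodule of M. Then N is a graded quasi-semiprime submodule of M if and only if N equals its graded envelope submodule RGE_M(N). -/

import Mathlib

open DirectSum

section Defs

variable {G : Type*} [AddGroup G] [DecidableEq G]
variable {R : Type*} [CommRing R] {M : Type*} [AddCommGroup M] [Module R M]

/-- An ideal is graded if it contains all homogeneous components of its elements. -/
def IsGradedIdeal (𝒜 : G → AddSubgroup R) [GradedRing 𝒜] (I : Ideal R) : Prop :=
  ∀ r ∈ I, ∀ g : G, (DirectSum.decompose 𝒜 r g : R) ∈ I

/-- A submodule is graded if it contains all homogeneous components of its elements. -/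
def IsGradedSubmodule (ℳ : G → AddSubgroup M) [DirectSum.Decomposition ℳ]
    (N : Submodule R M) : Prop :=
  ∀ m ∈ N, ∀ g : G, (DirectSum.decompose ℳ m g : M) ∈ N

/-- A graded semiprime ideal: proper, graded, and r^n*s ∈ I implies r*s ∈ I for homogeneous r,s. -/
def IsGradedSemiprimeIdeal (𝒜 : G → AddSubgroup R) [GradedRing 𝒜] (I : Ideal R) : Prop :=
  I ≠ ⊤ ∧ IsGradedIdeal 𝒜 I ∧
    ∀ r s : R, SetLike.IsHomogeneousElem 𝒜 r → SetLike.IsHomogeneousElem 𝒜 s →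
      ∀ n : ℕ, 0 < n → r ^ n * s ∈ I → r * s ∈ I

/-- A graded prime ideal. -/
def IsGradedPrimeIdeal (𝒜 : G → AddSubgroup R) [GradedRing 𝒜] (I : Ideal R) : Prop :=
  I ≠ ⊤ ∧ IsGradedIdeal 𝒜 I ∧
    ∀ r s : R, SetLike.IsHomogeneousElem 𝒜 r → SetLike.IsHomogeneousElem 𝒜 s →
      r * s ∈ I → r ∈ I ∨ s ∈ I

/-- A graded primary ideal. -/
def IsGradedPrimaryIdeal (𝒜 : G → AddSubgroup R) [GradedRing 𝒜] (I : Ideal R) : Prop :=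
  I ≠ ⊤ ∧ IsGradedIdeal 𝒜 I ∧
    ∀ r s : R, SetLike.IsHomogeneousElem 𝒜 r → SetLike.IsHomogeneousElem 𝒜 s →
      r * s ∈ I → r ∈ I ∨ ∃ n : ℕ, 0 < n ∧ s ^ n ∈ I

/-- A graded maximal ideal: proper graded ideal maximal among proper graded ideals. -/
def IsGradedMaximalIdeal (𝒜 : G → AddSubgroup R) [GradedRing 𝒜] (I : Ideal R) : Prop :=
  I ≠ ⊤ ∧ IsGradedIdeal 𝒜 I ∧
    ∀ J : Ideal R, IsGradedIdeal 𝒜 J → I ≤ J → J ≠ ⊤ → J = I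

/-- A graded semiprime submodule. -/
def IsGradedSemiprimeSubmodule (𝒜 : G → AddSubgroup R) (ℳ : G → AddSubgroup M)
    [DirectSum.Decomposition ℳ] (N : Submodule R M) : Prop :=
  N ≠ ⊤ ∧ IsGradedSubmodule ℳ N ∧
    ∀ (r : R) (m : M), SetLike.IsHomogeneousElem 𝒜 r → SetLike.IsHomogeneousElem ℳ m →
      ∀ n : ℕ, 0 < n → r ^ n • m ∈ N → r • m ∈ N

/-- A graded quasi-semiprime submodule: proper graded submodule whose colon ideal
`(N :_R M)` is a graded semiprime ideal. -/
def IsGradedQuasiSemiprimeSubmodule (𝒜 : G → AddSubgroup R) [GradedRing 𝒜]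
    (ℳ : G → AddSubgroup M) [DirectSum.Decomposition ℳ] (N : Submodule R M) : Prop :=
  N ≠ ⊤ ∧ IsGradedSubmodule ℳ N ∧ IsGradedSemiprimeIdeal 𝒜 (N.colon ⊤)

/-- A graded multiplication module: every graded submodule N equals (N :_R M)M. -/
def IsGradedMultiplicationModule (𝒜 : G → AddSubgroup R) [GradedRing 𝒜]
    (ℳ : G → AddSubgroup M) [DirectSum.Decomposition ℳ] : Prop :=
  ∀ N : Submodule R M, IsGradedSubmodule ℳ N → N = (N.colon ⊤) • (⊤ : Submodule R M)

end Defs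

/-!
For a proper graded `N`, the equation `N = RGE_M(N)` says exactly that `N` is a graded semiprime
submodule (`rⁿm ∈ N ⟹ rm ∈ N` for homogeneous `r, m`), so the theorem compares semiprime with
quasi-semiprime. Semiprime implies quasi-semiprime because membership in `(N :_R M)` can be tested
on homogeneous elements `m`, and `s • m` is homogeneous along with `s` and `m`. Conversely, in a
graded multiplication module `Rm = J M` with `J = (Rm :_R M)` graded; then `rⁿ J ⊆ (N :_R M)`, and
semiprimeness applied to the homogeneous components of `J` gives `r J ⊆ (N :_R M)`, whence
`rm ∈ r J M ⊆ N`.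
-/

open SetLike

section Decomposition

variable {ι R M σ τ : Type*} [DecidableEq ι] [Semiring R] [AddCommMonoid M] [Module R M]
  [SetLike σ R] [AddSubmonoidClass σ R] [SetLike τ M] [AddSubmonoidClass τ M]
  (𝒜 : ι → σ) (ℳ : ι → τ) [Decomposition ℳ]

theorem mem_colon_top_of_forall_isHomogeneousElem {N : Submodule R M} {r : R}
    (h : ∀ m, IsHomogeneousElem ℳ m → r • m ∈ N) :
    r ∈ N.colon ⊤ :=
  Submodule.mem_colon.mpr fun x _ =>
    Decomposition.inductionOn ℳ (motive := fun x => r • x ∈ N) (by simp)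
      (fun m => h m ⟨_, m.2⟩) (fun x y hx hy => by rw [smul_add]; exact N.add_mem hx hy) x

variable [AddRightCancelMonoid ι] [GradedRing 𝒜] [GradedSMul 𝒜 ℳ]

theorem DirectSum.coe_decompose_smul_add_of_right_mem (a : R) {x : M} {i j : ι}
    (hx : x ∈ ℳ j) : (decompose ℳ (a • x) (i + j) : M) = (decompose 𝒜 a i : R) • x := by
  induction a using Decomposition.inductionOn 𝒜 with
  | zero => simp
  | add a b ha hb => simp only [add_smul, decompose_add, add_apply, AddMemClass.coe_add, ha, hb]
  | @homogeneous k a =>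
    have hax : (a : R) • x ∈ ℳ (k + j) := GradedSMul.smul_mem a.2 hx
    by_cases hki : k = i
    · subst hki
      rw [decompose_of_mem_same ℳ hax, decompose_coe, of_eq_same]
    · rw [decompose_of_mem_ne ℳ hax (fun h => hki (add_right_cancel h)),
        decompose_of_mem_ne 𝒜 a.2 hki, zero_smul]

end Decomposition

section Envelope

variable {ι R M σ τ : Type*} [Semiring R] [AddCommMonoid M] [Module R M]
  [SetLike σ R] [SetLike τ M] (𝒜 : ι → σ) (ℳ : ι → τ)

/-- The graded envelope `GE_M(N)`; the paper's `RGE_M(N)` is its span. -/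
def gradedEnvelope (N : Submodule R M) : Set M :=
  {x | ∃ (r : R) (m : M), IsHomogeneousElem 𝒜 r ∧ IsHomogeneousElem ℳ m ∧
    (∃ n : ℕ, 0 < n ∧ r ^ n • m ∈ N) ∧ x = r • m}

theorem span_gradedEnvelope_le_iff {N : Submodule R M} :
    Submodule.span R (gradedEnvelope 𝒜 ℳ N) ≤ N ↔
      ∀ (r : R) (m : M), IsHomogeneousElem 𝒜 r → IsHomogeneousElem ℳ m →
        ∀ n : ℕ, 0 < n → r ^ n • m ∈ N → r • m ∈ N := by
  refine Submodule.span_le.trans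
    ⟨fun h r m hr hm n hn hrm => h ⟨r, m, hr, hm, ⟨n, hn, hrm⟩, rfl⟩, ?_⟩
  rintro h _ ⟨r, m, hr, hm, ⟨n, hn, hrm⟩, rfl⟩
  exact h r m hr hm n hn hrm

end Envelope

section Colon

variable {R M : Type*} [CommSemiring R] [AddCommMonoid M] [Module R M] {N : Submodule R M}

theorem Submodule.mul_mem_colon_top_of_smul_mem {a s : R} {m : M} (ha : a • m ∈ N)
    (hs : s ∈ (span R {m}).colon ⊤) : a * s ∈ N.colon ⊤ :=
  mem_colon.mpr fun x _ => by
    obtain ⟨t, ht⟩ := mem_span_singleton.mp (mem_colon.mp hs x trivial)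
    rw [mul_smul, ← ht, smul_comm]
    exact N.smul_mem t ha

theorem Submodule.smul_mem_of_mem_smul_top {I : Ideal R} {r : R} {m : M}
    (hm : m ∈ I • (⊤ : Submodule R M)) (h : ∀ s ∈ I, r * s ∈ N.colon ⊤) : r • m ∈ N :=
  smul_induction_on (p := fun z => r • z ∈ N) hm
    (fun s hs x _ => by rw [← mul_smul]; exact mem_colon.mp (h s hs) x trivial)
    (fun x y hx hy => by rw [smul_add]; exact N.add_mem hx hy)

end Colon

section GradedModule

variable {G : Type*} [AddGroup G] [DecidableEq G]
variable {R : Type*} [CommRing R] {M : Type*} [AddCommGroup M] [Module R M]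
theorem isGradedSubmodule_span_singleton (𝒜 : G → AddSubgroup R) [GradedRing 𝒜]
    (ℳ : G → AddSubgroup M) [Decomposition ℳ] [GradedSMul 𝒜 ℳ] {m : M}
    (hm : IsHomogeneousElem ℳ m) :
    IsGradedSubmodule ℳ (Submodule.span R {m}) := by
  obtain ⟨j, hj⟩ := hm
  rintro _ hx g
  obtain ⟨t, rfl⟩ := Submodule.mem_span_singleton.mp hx
  rw [← sub_add_cancel g j, coe_decompose_smul_add_of_right_mem 𝒜 ℳ t hj]
  exact Submodule.smul_mem _ _ (Submodule.mem_span_singleton_self m)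

variable (𝒜 : G → AddSubgroup R) [GradedRing 𝒜] (ℳ : G → AddSubgroup M) [Decomposition ℳ]

theorem IsGradedSemiprimeIdeal.mul_mem_of_pow_mul_mem {I J : Ideal R}
    (hI : IsGradedSemiprimeIdeal 𝒜 I) (hJ : IsGradedIdeal 𝒜 J) {r : R}
    (hr : IsHomogeneousElem 𝒜 r) {n : ℕ} (hn : 0 < n) (h : ∀ s ∈ J, r ^ n * s ∈ I) :
    ∀ s ∈ J, r * s ∈ I := by
  classical
  intro s hs
  rw [← sum_support_decompose 𝒜 s, Finset.mul_sum]
  exact I.sum_mem fun g _ => hI.2.2 r _ hr ⟨g, SetLike.coe_mem _⟩ n hn (h _ (hJ s hs g))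

theorem le_span_gradedEnvelope {N : Submodule R M} (hN : IsGradedSubmodule ℳ N) :
    N ≤ Submodule.span R (gradedEnvelope 𝒜 ℳ N) := by
  classical
  intro x hx
  rw [← sum_support_decompose ℳ x]
  refine Submodule.sum_mem _ fun g _ => Submodule.subset_span ?_
  exact ⟨1, _, isHomogeneousElem_one 𝒜, ⟨g, SetLike.coe_mem _⟩,
    ⟨1, one_pos, by simpa using hN x hx g⟩, (one_smul _ _).symm⟩

theorem isGradedSemiprimeSubmodule_iff_eq_span_gradedEnvelope {N : Submodule R M}
    (hNt : N ≠ ⊤) (hNg : IsGradedSubmodule ℳ N) :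
    IsGradedSemiprimeSubmodule 𝒜 ℳ N ↔ N = Submodule.span R (gradedEnvelope 𝒜 ℳ N) := by
  rw [le_antisymm_iff, and_iff_right (le_span_gradedEnvelope 𝒜 ℳ hNg),
    span_gradedEnvelope_le_iff]
  exact ⟨fun h => h.2.2, fun h => ⟨hNt, hNg, h⟩⟩

variable [GradedSMul 𝒜 ℳ]

theorem isGradedIdeal_colon_top {N : Submodule R M} (hN : IsGradedSubmodule ℳ N) :
    IsGradedIdeal 𝒜 (N.colon ⊤) := by
  intro s hs g
  refine mem_colon_top_of_forall_isHomogeneousElem ℳ fun m ⟨j, hm⟩ => ?_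
  rw [← coe_decompose_smul_add_of_right_mem 𝒜 ℳ s hm]
  exact hN _ (Submodule.mem_colon.mp hs m trivial) _

theorem IsGradedSemiprimeSubmodule.isGradedQuasiSemiprimeSubmodule {N : Submodule R M}
    (hN : IsGradedSemiprimeSubmodule 𝒜 ℳ N) : IsGradedQuasiSemiprimeSubmodule 𝒜 ℳ N := by
  obtain ⟨hNt, hNg, hN⟩ := hN
  refine ⟨hNt, hNg, ⟨fun h => hNt ?_, isGradedIdeal_colon_top 𝒜 ℳ hNg, ?_⟩⟩
  · exact eq_top_iff.mpr fun x _ => (Submodule.colon_eq_top_iff_subset _).mp h trivial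
  · intro r s hr hs n hn hrs
    refine mem_colon_top_of_forall_isHomogeneousElem ℳ fun m hm => ?_
    rw [mul_smul]
    refine hN r (s • m) hr (hs.graded_smul hm) n hn ?_
    rw [← mul_smul]
    exact Submodule.mem_colon.mp hrs m trivial

theorem IsGradedQuasiSemiprimeSubmodule.isGradedSemiprimeSubmodule
    (hM : IsGradedMultiplicationModule 𝒜 ℳ) {N : Submodule R M}
    (hN : IsGradedQuasiSemiprimeSubmodule 𝒜 ℳ N) : IsGradedSemiprimeSubmodule 𝒜 ℳ N := by
  refine ⟨hN.1, hN.2.1, fun r m hr hm n hn hrm => ?_⟩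
  have hP := isGradedSubmodule_span_singleton 𝒜 ℳ hm
  refine Submodule.smul_mem_of_mem_smul_top (hM _ hP ▸ Submodule.mem_span_singleton_self m) ?_
  exact hN.2.2.mul_mem_of_pow_mul_mem 𝒜 (isGradedIdeal_colon_top 𝒜 ℳ hP) hr hn
    fun s hs => Submodule.mul_mem_colon_top_of_smul_mem hrm hs

theorem isGradedQuasiSemiprimeSubmodule_iff_isGradedSemiprimeSubmodule
    (hM : IsGradedMultiplicationModule 𝒜 ℳ) {N : Submodule R M} :
    IsGradedQuasiSemiprimeSubmodule 𝒜 ℳ N ↔ IsGradedSemiprimeSubmodule 𝒜 ℳ N :=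
  ⟨IsGradedQuasiSemiprimeSubmodule.isGradedSemiprimeSubmodule 𝒜 ℳ hM,
    IsGradedSemiprimeSubmodule.isGradedQuasiSemiprimeSubmodule 𝒜 ℳ⟩

end GradedModule

variable {G : Type*} [AddGroup G] [DecidableEq G]
variable {R : Type*} [CommRing R] {M : Type*} [AddCommGroup M] [Module R M]
variable (𝒜 : G → AddSubgroup R) [GradedRing 𝒜]
variable (ℳ : G → AddSubgroup M) [DirectSum.Decomposition ℳ] [SetLike.GradedSMul 𝒜 ℳ]

theorem stmt6 (hM : IsGradedMultiplicationModule 𝒜 ℳ) (N : Submodule R M) (hNt : N ≠ ⊤)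
    (hNg : IsGradedSubmodule ℳ N) :
    IsGradedQuasiSemiprimeSubmodule 𝒜 ℳ N ↔
      N = Submodule.span R {x : M | ∃ (r : R) (m : M), SetLike.IsHomogeneousElem 𝒜 r ∧
        SetLike.IsHomogeneousElem ℳ m ∧ (∃ n : ℕ, 0 < n ∧ r ^ n • m ∈ N) ∧ x = r • m} :=
  (isGradedQuasiSemiprimeSubmodule_iff_isGradedSemiprimeSubmodule 𝒜 ℳ hM).trans
    (isGradedSemiprimeSubmodule_iff_eq_span_gradedEnvelope 𝒜 ℳ hNt hNg)
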